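/- If the empty cube is derivable from a closed PCNF ψ by cube resolution, existential reduction, and the model generation rule, then ψ is satisfiable. -/

import Mathlib

/-- Variables are natural numbers. -/
abbrev Var := Nat

/-- A literal: a variable with a polarity (`pos = true` means positive). -/
structure Lit where
  var : Var
  pos : Bool
deriving DecidableEq, Repr

abbrev Clause := List Lit
abbrev Cube := List Lit
abbrev CNF := List Clause

abbrev Assignment := Var → Bool

def Lit.eval (α : Assignment) (l : Lit) : Bool :=
  if l.pos then α l.var else !(α l.var)

def Clause.eval (α : Assignment) (C : Clause) : Bool := C.any (Lit.eval α)

def Cube.evalCube (α : Assignment) (C : Cube) : Bool := C.all (Lit.eval α)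

def CNF.eval (α : Assignment) (φ : CNF) : Bool := φ.all (Clause.eval α)

/-- A flat quantifier prefix: list of (quantifier, variable); `true` = ∃, `false` = ∀. -/
abbrev QPrefix := List (Bool × Var)

/-- Recursive semantics of closed prenex QBFs, relative to an ambient assignment `α`. -/
def QSat (α : Assignment) : QPrefix → (Assignment → Bool) → Prop
  | [], m => m α = true
  | (true, x) :: p, m => ∃ b, QSat (Function.update α x b) p m
  | (false, x) :: p, m => ∀ b, QSat (Function.update α x b) p m

/-- Satisfiability of a closed prenex formula. -/
def Sat (L : QPrefix) (m : Assignment → Bool) : Prop :=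
  QSat (fun _ => false) L m

def pvars (L : QPrefix) : List Var := L.map Prod.snd

/-- The quantifier of a variable in the prefix (`true` = ∃). -/
def quantOf (L : QPrefix) (x : Var) : Bool :=
  ((L.find? (fun p => p.2 == x)).map Prod.fst).getD true

/-- Position of a variable in the linear prefix ordering. -/
def varIdx (L : QPrefix) (x : Var) : Nat := (pvars L).idxOf x

def Clause.vars (C : Clause) : List Var := C.map Lit.var
def CNF.vars (φ : CNF) : List Var := φ.flatMap Clause.vars

/-- A closed PCNF: all matrix variables are quantified, and no variable twice. -/
def Closed (L : QPrefix) (φ : CNF) : Prop :=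
  (∀ v ∈ CNF.vars φ, v ∈ pvars L) ∧ (pvars L).Nodup

def existLits (L : QPrefix) (C : List Lit) : List Lit :=
  C.filter (fun l => quantOf L l.var)

def univLits (L : QPrefix) (C : List Lit) : List Lit :=
  C.filter (fun l => !(quantOf L l.var))

/-- Universal reduction of a clause: remove universal literals larger than all
existential literals of the clause. -/
def univRed (L : QPrefix) (C : Clause) : Clause :=
  C.filter (fun l =>
    !((!(quantOf L l.var)) &&
      (existLits L C).all (fun l' => decide (varIdx L l'.var < varIdx L l.var))))

/-- Existential reduction of a cube: remove existential literals larger than all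
universal literals of the cube. -/
def exRed (L : QPrefix) (C : Cube) : Cube :=
  C.filter (fun l =>
    !((quantOf L l.var) &&
      (univLits L C).all (fun l' => decide (varIdx L l'.var < varIdx L l.var))))

def Lit.neg (l : Lit) : Lit := ⟨l.var, !l.pos⟩

/-- Tautological clause / contradictory cube: contains complementary literals. -/
def Tauto (C : List Lit) : Prop := ∃ l ∈ C, Lit.neg l ∈ C

/-- Tentative Q-qResolvent of two clauses on existential pivot `p`. -/
def qResolvent (L : QPrefix) (C₁ C₂ : Clause) (p : Var) : Clause :=
  (univRed L C₁).filter (fun l => l ≠ ⟨p, true⟩) ++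
  (univRed L C₂).filter (fun l => l ≠ ⟨p, false⟩)

/-- Q-resolution derivations from the clauses of `φ`. -/
inductive QDer (L : QPrefix) (φ : CNF) : Clause → Prop
  | ax {C} : C ∈ φ → QDer L φ C
  | ur {C} : QDer L φ C → QDer L φ (univRed L C)
  | res {C₁ C₂} {p : Var} :
      QDer L φ C₁ → QDer L φ C₂ →
      ¬ Tauto C₁ → ¬ Tauto C₂ →
      quantOf L p = true → (⟨p, true⟩ : Lit) ∈ C₁ → (⟨p, false⟩ : Lit) ∈ C₂ →
      ¬ Tauto (qResolvent L C₁ C₂ p) →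
      QDer L φ (qResolvent L C₁ C₂ p)

/-- The initial cube of a (total) model `α`: conjunction of the literals set by `α`,
in prefix order. -/
def initCube (L : QPrefix) (α : Assignment) : Cube :=
  L.map (fun p => ⟨p.2, α p.2⟩)

/-- Tentative cube qResolvent of two cubes on universal pivot `x`. -/
def cubeResolvent (L : QPrefix) (C₁ C₂ : Cube) (x : Var) : Cube :=
  (exRed L C₁).filter (fun l => l ≠ ⟨x, true⟩) ++
  (exRed L C₂).filter (fun l => l ≠ ⟨x, false⟩)

/-- Cube derivations: model generation rule, existential reduction, cube resolution. -/
inductive CubeDer (L : QPrefix) (φ : CNF) : Cube → Prop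
  | init (α : Assignment) : CNF.eval α φ = true → CubeDer L φ (initCube L α)
  | er {C} : CubeDer L φ C → CubeDer L φ (exRed L C)
  | res {C₁ C₂} {x : Var} :
      CubeDer L φ C₁ → CubeDer L φ C₂ →
      ¬ Tauto C₁ → ¬ Tauto C₂ →
      quantOf L x = false → (⟨x, true⟩ : Lit) ∈ C₁ → (⟨x, false⟩ : Lit) ∈ C₂ →
      ¬ Tauto (cubeResolvent L C₁ C₂ x) →
      CubeDer L φ (cubeResolvent L C₁ C₂ x)

/-- Block-structured prefix: list of (quantifier, block of variables). -/
abbrev BPrefix := List (Bool × List Var)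

def flatP (P : BPrefix) : QPrefix := P.flatMap (fun b => b.2.map (fun x => (b.1, x)))

def SatB (P : BPrefix) (m : Assignment → Bool) : Prop := Sat (flatP P) m

/-- Closed PCNF with block prefix. -/
def ClosedB (P : BPrefix) (φ : CNF) : Prop :=
  (∀ v ∈ CNF.vars φ, v ∈ pvars (flatP P)) ∧
  (∀ v ∈ pvars (flatP P), v ∈ CNF.vars φ) ∧
  (pvars (flatP P)).Nodup

/-!
Every derivable cube `C` is redundant: for every matrix `M` implied by `φ`, if the QBF with
matrix `M ∨ C` is true then so is the one with matrix `M`. Initial cubes imply `φ`, and a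
cube resolvent implies the disjunction of the existentially reduced parents. Existential
reduction is sound because, once the prefix up to the innermost universal variable of `C` is
assigned, the reduced cube is decided; if it is true, the existential player completes it to
`C`, all remaining variables of `C` being existential. The empty cube is `⊤`, so the QBF with
matrix `φ` is true.
-/

theorem Lit.eval_eq_true_iff {α : Assignment} {l : Lit} : l.eval α = true ↔ α l.var = l.pos := by
  rcases l with ⟨v, _ | _⟩ <;> simp [Lit.eval]

theorem Lit.eval_congr {α β : Assignment} {l : Lit} (h : α l.var = β l.var) :
    l.eval α = l.eval β := by
  simp [Lit.eval, h]

theorem Lit.eq_of_var_eq_of_not_tauto {C : Cube} (hC : ¬ Tauto C) {l₁ l₂ : Lit}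
    (h₁ : l₁ ∈ C) (h₂ : l₂ ∈ C) (hv : l₁.var = l₂.var) : l₁ = l₂ := by
  rcases l₁ with ⟨v, p₁⟩
  rcases l₂ with ⟨w, p₂⟩
  obtain rfl : v = w := hv
  by_contra hne
  obtain rfl : p₂ = !p₁ := by cases p₁ <;> cases p₂ <;> simp_all
  exact hC ⟨_, h₁, h₂⟩

theorem Cube.evalCube_eq_true {α : Assignment} {C : Cube} :
    Cube.evalCube α C = true ↔ ∀ l ∈ C, l.eval α = true := by
  simp [Cube.evalCube]

theorem Cube.evalCube_congr {α β : Assignment} {C : Cube} (h : ∀ l ∈ C, α l.var = β l.var) :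
    Cube.evalCube α C = Cube.evalCube β C := by
  rw [Bool.eq_iff_iff, Cube.evalCube_eq_true, Cube.evalCube_eq_true]
  exact forall₂_congr fun l hl => by rw [Lit.eval_congr (h l hl)]

theorem CNF.eval_congr {α β : Assignment} {φ : CNF} (h : ∀ v ∈ CNF.vars φ, α v = β v) :
    CNF.eval α φ = CNF.eval β φ := by
  rw [Bool.eq_iff_iff]
  simp only [CNF.eval, Clause.eval, List.all_eq_true, List.any_eq_true]
  refine forall₂_congr fun C hC => exists_congr fun l => and_congr_right fun hl => ?_
  rw [Lit.eval_congr (h l.var ?_)]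
  simp only [CNF.vars, Clause.vars, List.mem_flatMap, List.mem_map]
  exact ⟨C, hC, l, hl, rfl⟩

namespace QSat

theorem mono_of_agree {m₁ m₂ : Assignment → Bool} {L : QPrefix} {α : Assignment}
    (h : ∀ β, (∀ v ∉ pvars L, β v = α v) → m₁ β = true → m₂ β = true)
    (h₁ : QSat α L m₁) : QSat α L m₂ := by
  induction L generalizing α with
  | nil => exact h α (fun _ _ => rfl) h₁
  | cons e L ih =>
    obtain ⟨q, x⟩ := e
    have step : ∀ b (β : Assignment), (∀ v ∉ pvars L, β v = Function.update α x b v) →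
        ∀ v ∉ pvars ((q, x) :: L), β v = α v := by
      intro b β hβ v hv
      simp only [pvars, List.map_cons, List.mem_cons, not_or] at hv
      rw [hβ v hv.2, Function.update_of_ne hv.1]
    cases q with
    | true =>
      obtain ⟨b, hb⟩ := h₁
      exact ⟨b, ih (fun β hβ => h β (step b β hβ)) hb⟩
    | false => exact fun b => ih (fun β hβ => h β (step b β hβ)) (h₁ b)

theorem mono {m₁ m₂ : Assignment → Bool} {L : QPrefix} {α : Assignment}
    (h : ∀ β, m₁ β = true → m₂ β = true) (h₁ : QSat α L m₁) : QSat α L m₂ :=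
  h₁.mono_of_agree fun β _ => h β

theorem of_forall {m : Assignment → Bool} (h : ∀ β, m β = true) :
    ∀ {L : QPrefix} {α : Assignment}, QSat α L m
  | [], α => h α
  | (true, _) :: _, _ => ⟨true, of_forall h⟩
  | (false, _) :: _, _ => fun _ => of_forall h

theorem append_mono {m₁ m₂ : Assignment → Bool} {B : QPrefix}
    (h : ∀ β, QSat β B m₁ → QSat β B m₂) :
    ∀ {A : QPrefix} {α : Assignment}, QSat α (A ++ B) m₁ → QSat α (A ++ B) m₂
  | [], α, h₁ => h α h₁
  | (true, _) :: _, _, ⟨b, hb⟩ => ⟨b, append_mono h hb⟩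
  | (false, _) :: _, _, h₁ => fun b => append_mono h (h₁ b)

end QSat

theorem qsat_evalCube {C : Cube} (hC : ¬ Tauto C) {L : QPrefix} {α : Assignment}
    (hα : ∀ l ∈ C, l.var ∉ pvars L → l.eval α = true) (hL : ∀ l ∈ C, (false, l.var) ∉ L) :
    QSat α L (fun β => Cube.evalCube β C) := by
  induction L generalizing α with
  | nil => exact Cube.evalCube_eq_true.2 fun l hl => hα l hl List.not_mem_nil
  | cons e L ih =>
    obtain ⟨q, x⟩ := e
    have step : ∀ b, (∀ l ∈ C, l.var = x → Function.update α x b x = l.pos) →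
        ∀ l ∈ C, l.var ∉ pvars L → l.eval (Function.update α x b) = true := by
      intro b hx l hl hlL
      by_cases hlx : l.var = x
      · rw [Lit.eval_eq_true_iff, hlx]
        exact hx l hl hlx
      · rw [Lit.eval_congr (Function.update_of_ne hlx _ _)]
        exact hα l hl (by rw [pvars, List.map_cons, List.mem_cons, not_or]; exact ⟨hlx, hlL⟩)
    have hL' : ∀ l ∈ C, (false, l.var) ∉ L := fun l hl h => hL l hl (List.mem_cons_of_mem _ h)
    cases q with
    | true =>
      -- `x` is set as demanded by the literal of `C` on `x`, which is unique since `C` is consistent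
      refine ⟨decide ((⟨x, true⟩ : Lit) ∈ C), ih (step _ fun l hl hlx => ?_) hL'⟩
      rcases l with ⟨v, _ | _⟩ <;> obtain rfl : v = x := hlx
      · have : (⟨v, true⟩ : Lit) ∉ C := fun h =>
          absurd (Lit.eq_of_var_eq_of_not_tauto hC hl h rfl) (by simp)
        simpa using this
      · simpa using hl
    | false =>
      have hCx : ∀ l ∈ C, l.var ≠ x := fun l hl hlx => hL l hl (by simp [hlx])
      exact fun b => ih (step b fun l hl hlx => absurd hlx (hCx l hl)) hL'

theorem qsat_or_evalCube_of_subcube {B : QPrefix} {C C' : Cube} {M : Assignment → Bool}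
    (hC : ¬ Tauto C) (hC'B : ∀ l ∈ C', l.var ∉ pvars B)
    (hCC' : ∀ l ∈ C, l.var ∉ pvars B → l ∈ C') (hCB : ∀ l ∈ C, (false, l.var) ∉ B)
    {α : Assignment} (h : QSat α B (fun β => M β || Cube.evalCube β C')) :
    QSat α B (fun β => M β || Cube.evalCube β C) := by
  cases hα : Cube.evalCube α C' with
  | true =>
    refine (qsat_evalCube hC (fun l hl hlB => ?_) hCB).mono fun β hβ => by simp [hβ]
    exact Cube.evalCube_eq_true.1 hα l (hCC' l hl hlB)
  | false =>
    refine h.mono_of_agree fun β hβ hM => ?_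
    rw [Cube.evalCube_congr fun l hl => hβ l.var (hC'B l hl), hα, Bool.or_false] at hM
    simp [hM]

theorem quantOf_eq_of_mem {L : QPrefix} (hL : (pvars L).Nodup) {q : Bool} {x : Var}
    (h : (q, x) ∈ L) : quantOf L x = q := by
  unfold quantOf
  cases hf : L.find? (fun p => p.2 == x) with
  | none => exact absurd h (by simpa using List.find?_eq_none.1 hf (q, x))
  | some p =>
    have hpx : p.2 = x := by simpa using List.find?_some hf
    rw [List.inj_on_of_nodup_map hL (List.mem_of_find?_eq_some hf) h hpx]
    rfl

def exRedCut (L : QPrefix) (C : Cube) : ℕ :=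
  (univLits L C).toFinset.sup fun l => varIdx L l.var + 1

theorem varIdx_lt_exRedCut {L : QPrefix} {C : Cube} {l : Lit} (hl : l ∈ C)
    (hq : quantOf L l.var = false) : varIdx L l.var < exRedCut L C :=
  Nat.lt_of_succ_le <| Finset.le_sup (f := fun l => varIdx L l.var + 1) <|
    List.mem_toFinset.2 <| List.mem_filter.2 ⟨hl, by simp [hq]⟩

theorem mem_exRed_iff {L : QPrefix} {C : Cube} {l : Lit} (hl : l ∈ C) :
    l ∈ exRed L C ↔ varIdx L l.var < exRedCut L C := by
  have hcut : (∀ l' ∈ univLits L C, varIdx L l'.var < varIdx L l.var) ↔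
      exRedCut L C ≤ varIdx L l.var := by
    simp [exRedCut, Finset.sup_le_iff]
  rw [exRed, List.mem_filter]
  simp only [hl, true_and, Bool.not_eq_true', Bool.and_eq_false_iff, List.all_eq_false,
    decide_eq_true_eq]
  constructor
  · rintro (hq | ⟨l', hl', hlt⟩)
    · exact varIdx_lt_exRedCut hl hq
    · exact not_le.1 fun hle => hlt (hcut.2 hle l' hl')
  · intro hlt
    by_contra! h
    exact absurd (hcut.1 h.2) (not_le.2 hlt)

theorem qsat_or_evalCube_exRed {L : QPrefix} {C : Cube} {M : Assignment → Bool}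
    (hL : (pvars L).Nodup) (hC : ¬ Tauto C) (hCL : ∀ l ∈ C, l.var ∈ pvars L) {α : Assignment}
    (h : QSat α L (fun β => M β || Cube.evalCube β (exRed L C))) :
    QSat α L (fun β => M β || Cube.evalCube β C) := by
  -- beyond position `k`, `C` has only existential variables and `exRed L C` none at all
  set k := exRedCut L C
  have hpvars : ∀ n, pvars (L.drop n) = (pvars L).drop n := fun n => List.map_drop ..
  have hdrop : ∀ l ∈ C, l.var ∈ pvars (L.drop k) ↔ k ≤ varIdx L l.var := fun l hl => by
    rw [← not_lt, varIdx, ← List.mem_take_iff_idxOf_lt (hCL l hl), hpvars]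
    refine ⟨fun hd ht => List.disjoint_take_drop hL le_rfl ht hd, fun ht => ?_⟩
    have := List.take_append_drop k (pvars L) ▸ hCL l hl
    exact (List.mem_append.1 this).resolve_left ht
  have key := QSat.append_mono (A := L.take k) (α := α) fun β =>
    qsat_or_evalCube_of_subcube (B := L.drop k) (M := M) hC
      (fun l hl => by
        rw [hdrop l (List.mem_of_mem_filter hl), not_le]
        exact (mem_exRed_iff (List.mem_of_mem_filter hl)).1 hl)
      (fun l hl hlB => (mem_exRed_iff hl).2 (not_le.1 ((hdrop l hl).not.1 hlB)))
      (fun l hl hB => by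
        have hlt := varIdx_lt_exRedCut hl (quantOf_eq_of_mem hL (List.mem_of_mem_drop hB))
        exact absurd ((hdrop l hl).1 (List.mem_map_of_mem (f := Prod.snd) hB)) (not_le.2 hlt))
  rw [List.take_append_drop] at key
  exact key h

theorem mem_initCube {L : QPrefix} {γ : Assignment} {l : Lit} :
    l ∈ initCube L γ ↔ l.var ∈ pvars L ∧ l.pos = γ l.var := by
  rcases l with ⟨v, p⟩
  simp only [initCube, pvars, List.mem_map, Lit.mk.injEq]
  constructor
  · rintro ⟨e, he, rfl, rfl⟩
    exact ⟨⟨e, he, rfl⟩, rfl⟩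
  · rintro ⟨⟨e, he, rfl⟩, rfl⟩
    exact ⟨e, he, rfl, rfl⟩

theorem eq_of_evalCube_initCube {L : QPrefix} {β γ : Assignment}
    (h : Cube.evalCube β (initCube L γ) = true) {v : Var} (hv : v ∈ pvars L) : β v = γ v :=
  Lit.eval_eq_true_iff.1 <| Cube.evalCube_eq_true.1 h ⟨v, γ v⟩ (mem_initCube.2 ⟨hv, rfl⟩)

theorem evalCube_of_evalCube_filter_ne {β : Assignment} {C : Cube} {p : Lit}
    (h : Cube.evalCube β (C.filter (· ≠ p)) = true) (hp : p.eval β = true) :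
    Cube.evalCube β C = true := by
  refine Cube.evalCube_eq_true.2 fun l hl => ?_
  by_cases hlp : l = p
  · exact hlp ▸ hp
  · exact Cube.evalCube_eq_true.1 h l (List.mem_filter.2 ⟨hl, by simpa using hlp⟩)

theorem evalCube_exRed_of_evalCube_cubeResolvent {L : QPrefix} {C₁ C₂ : Cube} {x : Var}
    {β : Assignment} (h : Cube.evalCube β (cubeResolvent L C₁ C₂ x) = true) :
    Cube.evalCube β (exRed L C₁) = true ∨ Cube.evalCube β (exRed L C₂) = true := by
  simp only [cubeResolvent, Cube.evalCube, List.all_append, Bool.and_eq_true] at h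
  cases hx : β x
  · exact .inr <| evalCube_of_evalCube_filter_ne h.2 (by simp [Lit.eval, hx])
  · exact .inl <| evalCube_of_evalCube_filter_ne h.1 (by simp [Lit.eval, hx])

namespace CubeDer

variable {L : QPrefix} {φ : CNF} {C : Cube}

theorem var_mem (h : CubeDer L φ C) : ∀ l ∈ C, l.var ∈ pvars L := by
  induction h with
  | init γ _ => exact fun l hl => (mem_initCube.1 hl).1
  | er _ ih => exact fun l hl => ih l (List.mem_of_mem_filter hl)
  | res _ _ _ _ _ _ _ _ ih₁ ih₂ =>
    intro l hl
    rcases List.mem_append.1 hl with hl | hl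
    · exact ih₁ l (List.mem_of_mem_filter (List.mem_of_mem_filter hl))
    · exact ih₂ l (List.mem_of_mem_filter (List.mem_of_mem_filter hl))

theorem not_tauto (h : CubeDer L φ C) : ¬ Tauto C := by
  induction h with
  | init γ _ =>
    rintro ⟨l, hl, hnl⟩
    have h₁ := (mem_initCube.1 hl).2
    have h₂ := (mem_initCube.1 hnl).2
    simp only [Lit.neg] at h₂
    rw [← h₁] at h₂
    exact Bool.not_ne_self _ h₂
  | er _ ih =>
    exact fun ⟨l, hl, hnl⟩ => ih ⟨l, List.mem_of_mem_filter hl, List.mem_of_mem_filter hnl⟩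
  | res _ _ _ _ _ _ _ hR => exact hR

end CubeDer

/-- Quantifying over all matrices `M` implied by `φ`, not just `φ` itself, makes this property
inductive under cube resolution. -/
def RedundantCube (L : QPrefix) (φ : CNF) (C : Cube) : Prop :=
  ∀ M : Assignment → Bool, (∀ β, CNF.eval β φ = true → M β = true) →
    Sat L (fun β => M β || Cube.evalCube β C) → Sat L M

theorem CubeDer.redundantCube {L : QPrefix} {φ : CNF} (hclosed : Closed L φ) {C : Cube}
    (h : CubeDer L φ C) : RedundantCube L φ C := by
  have exRed_sound : ∀ {C : Cube}, CubeDer L φ C → ∀ {M : Assignment → Bool},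
      Sat L (fun β => M β || Cube.evalCube β (exRed L C)) →
      Sat L (fun β => M β || Cube.evalCube β C) := fun hC =>
    qsat_or_evalCube_exRed hclosed.2 hC.not_tauto hC.var_mem
  induction h with
  | init γ hγ =>
    refine fun M hM hSat => hSat.mono fun β hβ => ?_
    rcases Bool.or_eq_true_iff.1 hβ with hβ | hβ
    · exact hβ
    · refine hM β (hγ ▸ CNF.eval_congr fun v hv => ?_)
      exact eq_of_evalCube_initCube hβ (hclosed.1 v hv)
  | er hC ih => exact fun M hM hSat => ih M hM (exRed_sound hC hSat)
  | @res C₁ C₂ _ hC₁ hC₂ _ _ _ _ _ _ ih₁ ih₂ =>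
    intro M hM hSat
    have h₁₂ : Sat L (fun β => (M β || Cube.evalCube β (exRed L C₁)) ||
        Cube.evalCube β (exRed L C₂)) := hSat.mono fun β hβ => by
      rcases Bool.or_eq_true_iff.1 hβ with hβ | hβ
      · simp [hβ]
      · rcases evalCube_exRed_of_evalCube_cubeResolvent hβ with hβ | hβ <;> simp [hβ]
    have h₂ := ih₂ _ (fun β hβ => by simp [hM β hβ]) (exRed_sound hC₂ h₁₂)
    exact ih₁ M hM (exRed_sound hC₁ h₂)

/-- if the empty cube is derivable by the model generation rule,
existential reduction and cube resolution, then the closed PCNF is satisfiable. -/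
theorem empty_cube_sat (L : QPrefix) (φ : CNF)
    (hclosed : Closed L φ)
    (h : CubeDer L φ ([] : Cube)) :
    Sat L (fun α => CNF.eval α φ) :=
  h.redundantCube hclosed _ (fun _ => id) (QSat.of_forall fun _ => by simp [Cube.evalCube])
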